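/- Let E be the real symmetric matrix with rows ((3,−1,−1),(−1,2,0),(−1,0,2)) (a matrix in the interior of the cone σ_{K₄−1} spanned by the quadratic forms x₁², x₂², x₃², (x₁−x₂)², (x₁−x₃)²). Fix a complex symmetric 3×3 matrix R and set τ(y) := iyE + R; then τ(y) ∈ ℍ₃ for all sufficiently large y > 0. Then the limit lim_{y→∞} e^{20πy} · θ_null(τ(y)) exists, and it equals zero if and only if e^{2πiR₂₃} = 1. -/

import Mathlib

/-!
Write the summation index of `θ[ε;δ]` as `m = N + ε/2`. At `τ(y) = iyE + R` the summand is
`exp (-π y mᵀEm + φ(m))` with a phase `φ` independent of `y`, and `4 mᵀEm = q(2m)` for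
`q(n) = n₀² + n₁² + n₂² + (n₀ - n₁)² + (n₀ - n₂)²`. An odd square is at least `1`, so `q(2N + ε)`
is at least the number `μ(ε)` of those five linear forms that are odd at `ε`, and equality
forces every form into `{-1, 0, 1}`. By dominated convergence `e^{πμ(ε)y/4} θ[ε;δ]` tends to the
finite sum of `e^{φ}` over the minimizers, and `μ` sums to `80` over the even characteristics.

For `ε ≠ (0,1,1)` the minimizers are `N ∈ {0, -ε}`, i.e. `m = ±ε/2`, whose phases differ by
`πi εᵀδ ∈ 2πiℤ`; so that factor of the limit is non-zero. For `ε = (0,1,1)` (then `δ₁ = δ₂`)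
the four minimizers give `2 e^{φ(0,-1/2,1/2)} (1 + e^{πi (R₁₂ + δ₁)})` (indices from `0`), which
vanishes for `δ₁ = 0` or `δ₁ = 1` exactly when `e^{2πi R₁₂} = 1`.
-/

open Complex Matrix

noncomputable def theta (g : ℕ) (ε δ : Fin g → ℤ) (τ : Matrix (Fin g) (Fin g) ℂ)
    (z : Fin g → ℂ) : ℂ :=
  ∑' N : Fin g → ℤ,
    Complex.exp (↑Real.pi * I *
        (∑ j, ∑ k, ((N j : ℂ) + (ε j : ℂ) / 2) * τ j k * ((N k : ℂ) + (ε k : ℂ) / 2)) +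
      2 * ↑Real.pi * I *
        (∑ j, ((N j : ℂ) + (ε j : ℂ) / 2) * (z j + (δ j : ℂ) / 2)))

def SiegelUpper (g : ℕ) (τ : Matrix (Fin g) (Fin g) ℂ) : Prop :=
  τ.IsSymm ∧ (Matrix.of fun j k => (τ j k).im : Matrix (Fin g) (Fin g) ℝ).PosDef

noncomputable def thetaNull3 (τ : Matrix (Fin 3) (Fin 3) ℂ) : ℂ :=
  ∏ c ∈ Finset.univ.filter
      (fun c : (Fin 3 → Fin 2) × (Fin 3 → Fin 2) =>
        (∑ j, (c.1 j).val * (c.2 j).val) % 2 = 0),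
    theta 3 (fun j => ((c.1 j).val : ℤ)) (fun j => ((c.2 j).val : ℤ)) τ 0

/-- The matrix generating the interior of the cone `σ_{K₄−1}`. -/
noncomputable def EK41 : Matrix (Fin 3) (Fin 3) ℂ := !![3, -1, -1; -1, 2, 0; -1, 0, 2]

open Filter Topology
open scoped Real

namespace ThetaK41

lemma abs_sum_mul_mul_le {n : Type*} [Fintype n] (B : Matrix n n ℝ) (x : n → ℝ) :
    |∑ i, ∑ j, x i * B i j * x j| ≤ (∑ i, ∑ j, |B i j|) * ∑ i, x i ^ 2 := by
  have hsq : ∀ i, x i ^ 2 ≤ ∑ k, x k ^ 2 := fun i =>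
    Finset.single_le_sum (f := fun k => x k ^ 2) (fun _ _ => sq_nonneg _) (Finset.mem_univ i)
  have hterm : ∀ i j, |x i * B i j * x j| ≤ |B i j| * ∑ k, x k ^ 2 := fun i j => by
    rw [abs_mul, abs_mul, mul_right_comm, mul_comm]
    have : |x i| * |x j| ≤ ∑ k, x k ^ 2 := by
      nlinarith [two_mul_le_add_sq |x i| |x j|, sq_abs (x i), sq_abs (x j), hsq i, hsq j]
    exact mul_le_mul_of_nonneg_left this (abs_nonneg _)
  calc |∑ i, ∑ j, x i * B i j * x j| ≤ ∑ i, ∑ j, |x i * B i j * x j| :=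
        (Finset.abs_sum_le_sum_abs _ _).trans
          (Finset.sum_le_sum fun i _ => Finset.abs_sum_le_sum_abs _ _)
    _ ≤ ∑ i, ∑ j, |B i j| * ∑ k, x k ^ 2 :=
        Finset.sum_le_sum fun i _ => Finset.sum_le_sum fun j _ => hterm i j
    _ = (∑ i, ∑ j, |B i j|) * ∑ i, x i ^ 2 := by simp only [Finset.sum_mul]

lemma dotProduct_mulVec_eq_sum {n : Type*} [Fintype n] (B : Matrix n n ℝ) (x : n → ℝ) :
    x ⬝ᵥ B *ᵥ x = ∑ i, ∑ j, x i * B i j * x j := by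
  simp only [dotProduct, mulVec, Finset.mul_sum, mul_assoc]

lemma eventually_posDef_smul_add {n : Type*} [Fintype n] [DecidableEq n] (A B : Matrix n n ℝ)
    (hA : (A - 1).PosSemidef) (hB : B.IsHermitian) :
    ∀ᶠ y : ℝ in atTop, (y • A + B).PosDef := by
  filter_upwards [eventually_gt_atTop (∑ i, ∑ j, |B i j|)] with y hy
  have hAh : A.IsHermitian := by simpa using hA.isHermitian.add isHermitian_one
  refine .of_dotProduct_mulVec_pos ((hAh.smul (IsSelfAdjoint.all y)).add hB) fun x hx => ?_
  have hxx : 0 < x ⬝ᵥ x := by simpa using dotProduct_star_self_pos_iff.mpr hx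
  have hxA : x ⬝ᵥ x ≤ x ⬝ᵥ A *ᵥ x := by
    have := hA.dotProduct_mulVec_nonneg x
    simpa [sub_mulVec, dotProduct_sub, one_mulVec] using this
  have hsq : ∑ i, x i ^ 2 = x ⬝ᵥ x := by simp [dotProduct, sq]
  have hxB := abs_le.mp (abs_sum_mul_mul_le B x)
  rw [← dotProduct_mulVec_eq_sum, hsq] at hxB
  simp only [star_trivial, add_mulVec, smul_mulVec, dotProduct_add, dotProduct_smul, smul_eq_mul]
  have hC : 0 ≤ ∑ i, ∑ j, |B i j| := by positivity
  nlinarith [mul_le_mul_of_nonneg_left hxA (hC.trans hy.le), mul_lt_mul_of_pos_right hy hxx]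

lemma eventually_siegelUpper {g : ℕ} (E R : Matrix (Fin g) (Fin g) ℂ) (hE : E.IsSymm)
    (hE_im : ∀ j k, (E j k).im = 0) (hE_one : (E.map re - 1).PosSemidef) (hR : R.IsSymm) :
    ∀ᶠ y : ℝ in atTop, SiegelUpper g ((I * y) • E + R) := by
  have hIm : ∀ y : ℝ, (of fun j k => (((I * y) • E + R) j k).im) = y • E.map re + R.map im :=
    fun y => by ext j k; simp [hE_im]
  have hRim : (R.map im).IsHermitian := by
    simpa [isHermitian_iff_isSymm] using hR.map im
  filter_upwards [eventually_posDef_smul_add _ _ hE_one hRim] with y hy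
  exact ⟨(hE.smul _).add hR, by rwa [hIm]⟩

lemma EK41_isSymm : EK41.IsSymm := by
  ext i j; fin_cases i <;> fin_cases j <;> simp [EK41]

lemma EK41_im (j k : Fin 3) : (EK41 j k).im = 0 := by
  fin_cases j <;> fin_cases k <;> simp [EK41]

lemma posSemidef_EK41_re_sub_one : (EK41.map re - 1).PosSemidef := by
  have hE : EK41.map re - 1 = !![2, -1, -1; -1, 1, 0; -1, 0, 1] := by
    ext i j; fin_cases i <;> fin_cases j <;> norm_num [EK41]
  rw [hE, posSemidef_iff_dotProduct_mulVec]
  refine ⟨by ext i j; fin_cases i <;> fin_cases j <;> rfl, fun x => ?_⟩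
  simp only [star_trivial, dotProduct, mulVec, Fin.sum_univ_three, of_apply, cons_val',
    cons_val_zero, cons_val_one, cons_val_two, head_cons, tail_cons, empty_val', cons_val_fin_one,
    head_fin_const]
  nlinarith [sq_nonneg (x 0 - x 1), sq_nonneg (x 0 - x 2)]

-- The rows are the forms `x₀, x₁, x₂, x₀ - x₁, x₀ - x₂` spanning the cone:
-- `EK41 = formMatrixᵀ * formMatrix`.
def formMatrix : Matrix (Fin 5) (Fin 3) ℤ := !![1, 0, 0; 0, 1, 0; 0, 0, 1; 1, -1, 0; 1, 0, -1]

lemma formMatrix_mulVec (n : Fin 3 → ℤ) :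
    formMatrix *ᵥ n = ![n 0, n 1, n 2, n 0 - n 1, n 0 - n 2] := by
  ext k
  fin_cases k <;> simp [formMatrix, mulVec, dotProduct, Fin.sum_univ_three, sub_eq_add_neg]

def latticeForm (n : Fin 3 → ℤ) : ℤ := ∑ k, (formMatrix *ᵥ n) k ^ 2

def minValue (ε : Fin 3 → ℤ) : ℤ := ∑ k, (formMatrix *ᵥ ε) k % 2

-- Equality in `minValue_le_latticeForm` forces `2 N j + ε j ∈ {-1, 0, 1}`, hence the box.
def minimizers (ε : Fin 3 → ℤ) : Finset (Fin 3 → ℤ) :=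
  (Fintype.piFinset fun _ => ({-1, 0} : Finset ℤ)).filter
    fun N => latticeForm (2 • N + ε) = minValue ε

lemma emod_two_le_sq (t : ℤ) : t % 2 ≤ t ^ 2 := by
  rcases le_or_gt 2 |t| with h | h
  · nlinarith [Int.emod_lt_of_pos t two_pos, sq_abs t]
  · obtain ⟨h1, h2⟩ := abs_lt.mp h
    interval_cases t <;> decide

lemma formMatrix_mulVec_emod_two (ε N : Fin 3 → ℤ) (k : Fin 5) :
    (formMatrix *ᵥ (2 • N + ε)) k % 2 = (formMatrix *ᵥ ε) k % 2 := by
  rw [mulVec_add, mulVec_smul, Pi.add_apply, Pi.smul_apply, nsmul_eq_mul, Nat.cast_ofNat,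
    Int.mul_add_emod_self_left]

lemma minValue_le_latticeForm (ε N : Fin 3 → ℤ) : minValue ε ≤ latticeForm (2 • N + ε) := by
  simp only [minValue, latticeForm, ← formMatrix_mulVec_emod_two ε N]
  exact Finset.sum_le_sum fun k _ => emod_two_le_sq _

lemma mem_minimizers {ε : Fin 3 → ℤ} (hε : ∀ j, ε j ∈ Set.Icc 0 1) {N : Fin 3 → ℤ} :
    N ∈ minimizers ε ↔ latticeForm (2 • N + ε) = minValue ε := by
  refine ⟨fun h => (Finset.mem_filter.mp h).2, fun h => Finset.mem_filter.mpr ⟨?_, h⟩⟩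
  simp only [minValue, latticeForm, ← formMatrix_mulVec_emod_two ε N] at h
  have hk := (Finset.sum_eq_sum_iff_of_le fun k _ =>
    emod_two_le_sq ((formMatrix *ᵥ (2 • N + ε)) k)).mp h.symm
  refine Fintype.mem_piFinset.mpr fun j => ?_
  have hj : (2 * N j + ε j) ^ 2 = (2 * N j + ε j) % 2 := by
    have hk' := fun k => (hk k (Finset.mem_univ k)).symm
    simp only [formMatrix_mulVec, Pi.add_apply, two_nsmul] at hk'
    fin_cases j
    exacts [by simpa [two_mul] using hk' 0, by simpa [two_mul] using hk' 1,
      by simpa [two_mul] using hk' 2]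
  have hmod := Int.emod_lt_of_pos (2 * N j + ε j) two_pos
  obtain ⟨hε₀, hε₁⟩ := hε j
  have hN : N j ≤ 0 ∧ -1 ≤ N j := by constructor <;> nlinarith
  simp only [Finset.mem_insert, Finset.mem_singleton]
  omega

lemma summable_prod_fin {β : Type*} {f : β → ℝ} (hf₀ : ∀ b, 0 ≤ f b) (hf : Summable f) :
    ∀ n : ℕ, Summable fun N : Fin n → β => ∏ j, f (N j)
  | 0 => .of_finite
  | n + 1 => by
    have h := hf.mul_of_nonneg (summable_prod_fin hf₀ hf n) hf₀
      fun N => Finset.prod_nonneg fun j _ => hf₀ (N j)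
    refine (Equiv.summable_iff (Fin.consEquiv fun _ => β)).mp (h.congr fun p => ?_)
    simp [Fin.consEquiv, Fin.prod_univ_succ]

lemma summable_exp_neg_mul_abs {c : ℝ} (hc : 0 < c) :
    Summable fun n : ℤ => Real.exp (-(c * |(n : ℝ)|)) := by
  have h : Summable fun n : ℕ => Real.exp (-(c * |(n : ℝ)|)) := by
    simpa [mul_comm] using Real.summable_exp_nat_mul_iff.mpr (neg_neg_iff_pos.mpr hc)
  exact summable_int_iff_summable_nat_and_neg.mpr ⟨by simpa using h, by simpa using h⟩

lemma tendsto_tsum_exp_neg_mul_add {ι : Type*} (q : ι → ℝ) (w : ι → ℂ) (S : Finset ι)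
    (hq : ∀ i, 0 ≤ q i) (hS : ∀ i, i ∈ S ↔ q i = 0) (y₀ : ℝ)
    (hsum : Summable fun i => Real.exp (-(y₀ * q i) + (w i).re)) :
    Tendsto (fun y : ℝ => ∑' i, cexp (-↑(y * q i) + w i)) atTop (𝓝 (∑ i ∈ S, cexp (w i))) := by
  classical
  have hlim : ∑ i ∈ S, cexp (w i) = ∑' i, if i ∈ S then cexp (w i) else 0 := by
    rw [tsum_eq_sum (s := S) fun i hi => if_neg hi]
    exact Finset.sum_congr rfl fun i hi => (if_pos hi).symm
  have hnorm : ∀ y i, ‖cexp (-↑(y * q i) + w i)‖ = Real.exp (-(y * q i) + (w i).re) := by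
    simp [Complex.norm_exp]
  rw [hlim]
  refine tendsto_tsum_of_dominated_convergence hsum (fun i => ?_) ?_
  · split_ifs with hi
    · simp [(hS i).mp hi]
    · have hqi : 0 < q i := (hq i).lt_of_ne (Ne.symm (mt (hS i).mpr hi))
      rw [tendsto_zero_iff_norm_tendsto_zero]
      simp only [hnorm]
      exact Real.tendsto_exp_atBot.comp <| tendsto_atBot_add_const_right _ _ <|
        tendsto_neg_atTop_atBot.comp (tendsto_id.atTop_mul_const hqi)
  · filter_upwards [eventually_ge_atTop y₀] with y hy i
    rw [hnorm]
    gcongr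
    exact hq i

noncomputable def halfShift (ε N : Fin 3 → ℤ) (j : Fin 3) : ℝ := N j + ε j / 2

noncomputable def phase (R : Matrix (Fin 3) (Fin 3) ℂ) (δ : Fin 3 → ℤ) (m : Fin 3 → ℝ) : ℂ :=
  π * I * (∑ j, ∑ k, (m j : ℂ) * R j k * m k + ∑ j, (m j : ℂ) * δ j)

lemma latticeForm_eq (ε N : Fin 3 → ℤ) :
    (latticeForm (2 • N + ε) : ℝ) = 4 * (∑ j, halfShift ε N j ^ 2 +
      (halfShift ε N 0 - halfShift ε N 1) ^ 2 + (halfShift ε N 0 - halfShift ε N 2) ^ 2) := by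
  simp only [latticeForm, formMatrix_mulVec, halfShift, Fin.sum_univ_three, Fin.sum_univ_five,
    cons_val_zero, cons_val_one, cons_val_two, cons_val_three, cons_val_four, head_cons,
    tail_cons, two_nsmul, Pi.add_apply]
  push_cast
  ring

lemma four_mul_sum_sq_halfShift_le (ε N : Fin 3 → ℤ) :
    4 * ∑ j, halfShift ε N j ^ 2 ≤ latticeForm (2 • N + ε) := by
  rw [latticeForm_eq]
  nlinarith [sq_nonneg (halfShift ε N 0 - halfShift ε N 1),
    sq_nonneg (halfShift ε N 0 - halfShift ε N 2)]

lemma theta_summand_eq (R : Matrix (Fin 3) (Fin 3) ℂ) (y : ℝ) (ε δ N : Fin 3 → ℤ) :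
    π * I * (∑ j, ∑ k, ((N j : ℂ) + (ε j : ℂ) / 2) * ((I * y) • EK41 + R) j k *
          ((N k : ℂ) + (ε k : ℂ) / 2)) +
      2 * π * I * (∑ j, ((N j : ℂ) + (ε j : ℂ) / 2) * ((0 : Fin 3 → ℂ) j + (δ j : ℂ) / 2)) =
    -↑(y * (π * latticeForm (2 • N + ε) / 4)) + phase R δ (halfShift ε N) := by
  rw [latticeForm_eq]
  simp only [Fin.sum_univ_three, Matrix.add_apply, Matrix.smul_apply, smul_eq_mul, Pi.zero_apply,
    EK41, of_apply, cons_val', cons_val_zero, cons_val_one, cons_val_two, head_cons, tail_cons,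
    empty_val', cons_val_fin_one, head_fin_const, phase, halfShift]
  push_cast
  linear_combination (π * y * (((N 0 : ℂ) + ε 0 / 2) ^ 2 + ((N 1 : ℂ) + ε 1 / 2) ^ 2 +
    ((N 2 : ℂ) + ε 2 / 2) ^ 2 + ((N 0 : ℂ) + ε 0 / 2 - (N 1 + ε 1 / 2)) ^ 2 +
    ((N 0 : ℂ) + ε 0 / 2 - (N 2 + ε 2 / 2)) ^ 2)) * I_sq

lemma phase_re (R : Matrix (Fin 3) (Fin 3) ℂ) (δ : Fin 3 → ℤ) (m : Fin 3 → ℝ) :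
    (phase R δ m).re = -(π * ∑ j, ∑ k, m j * (R j k).im * m k) := by
  simp [phase, Complex.mul_re, Complex.mul_im, Complex.im_sum]

lemma phase_re_le (R : Matrix (Fin 3) (Fin 3) ℂ) (δ : Fin 3 → ℤ) (m : Fin 3 → ℝ) :
    (phase R δ m).re ≤ π * ((∑ j, ∑ k, |(R j k).im|) * ∑ j, m j ^ 2) := by
  have h := neg_le_of_abs_le (abs_sum_mul_mul_le (R.map im) m)
  simp only [map_apply] at h
  rw [phase_re]
  nlinarith [Real.pi_pos]

lemma sum_abs_sub_three_le (ε N : Fin 3 → ℤ) (hε : ∀ j, ε j ∈ Set.Icc 0 1) :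
    ∑ j, |(N j : ℝ)| - 3 ≤ ∑ j, halfShift ε N j ^ 2 := by
  have key : ∀ j, |(N j : ℝ)| - 1 ≤ halfShift ε N j ^ 2 := fun j => by
    have h0 : (0 : ℝ) ≤ ε j := by exact_mod_cast (hε j).1
    have h1 : (ε j : ℝ) ≤ 1 := by exact_mod_cast (hε j).2
    rcases abs_cases (N j : ℝ) with ⟨h, _⟩ | ⟨h, _⟩ <;> rw [h, halfShift] <;>
      nlinarith [sq_nonneg ((N j : ℝ) + 1), sq_nonneg ((N j : ℝ) - 1)]
  simp only [Fin.sum_univ_three]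
  linarith [key 0, key 1, key 2]

lemma summable_exp_neg_gap_add_phase_re (R : Matrix (Fin 3) (Fin 3) ℂ) (ε δ : Fin 3 → ℤ)
    (hε : ∀ j, ε j ∈ Set.Icc 0 1) :
    Summable fun N => Real.exp (-(((∑ j, ∑ k, |(R j k).im|) + 1) *
        (π * (latticeForm (2 • N + ε) - minValue ε) / 4)) + (phase R δ (halfShift ε N)).re) := by
  set C := ∑ j, ∑ k, |(R j k).im|
  have hC : 0 ≤ C := by positivity
  have hsum := ((summable_prod_fin (fun n => (Real.exp_pos _).le)
    (summable_exp_neg_mul_abs Real.pi_pos) 3).mul_left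
      (Real.exp (3 * π + (C + 1) * π * minValue ε / 4)))
  refine hsum.of_nonneg_of_le (fun _ => (Real.exp_pos _).le) fun N => ?_
  rw [← Real.exp_sum, ← Real.exp_add, Real.exp_le_exp]
  have hq := four_mul_sum_sq_halfShift_le ε N
  have hre : (phase R δ (halfShift ε N)).re ≤ π * (C * ∑ j, halfShift ε N j ^ 2) :=
    phase_re_le R δ _
  have habs := sum_abs_sub_three_le ε N hε
  rw [Finset.sum_neg_distrib, ← Finset.mul_sum]
  nlinarith [mul_le_mul_of_nonneg_left hq (mul_nonneg Real.pi_pos.le hC),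
    mul_le_mul_of_nonneg_left hq Real.pi_pos.le, mul_le_mul_of_nonneg_left habs Real.pi_pos.le]

noncomputable def limitFactor (R : Matrix (Fin 3) (Fin 3) ℂ) (ε δ : Fin 3 → ℤ) : ℂ :=
  ∑ N ∈ minimizers ε, cexp (phase R δ (halfShift ε N))

lemma tendsto_exp_mul_theta (R : Matrix (Fin 3) (Fin 3) ℂ) (ε δ : Fin 3 → ℤ)
    (hε : ∀ j, ε j ∈ Set.Icc 0 1) :
    Tendsto (fun y : ℝ => (Real.exp (π * minValue ε / 4 * y) : ℂ) *
        theta 3 ε δ ((I * y) • EK41 + R) 0) atTop (𝓝 (limitFactor R ε δ)) := by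
  set gap : (Fin 3 → ℤ) → ℝ := fun N => π * (latticeForm (2 • N + ε) - minValue ε) / 4
  have hgap : ∀ N, 0 ≤ gap N := fun N => by
    have h : (minValue ε : ℝ) ≤ latticeForm (2 • N + ε) := mod_cast minValue_le_latticeForm ε N
    exact div_nonneg (mul_nonneg Real.pi_pos.le (sub_nonneg.mpr h)) zero_le_four
  have hzero : ∀ N, N ∈ minimizers ε ↔ gap N = 0 := fun N => by
    rw [mem_minimizers hε]
    simp only [gap, div_eq_zero_iff, mul_eq_zero, Real.pi_ne_zero, sub_eq_zero, false_or]
    norm_num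
  have hrw : ∀ y : ℝ, (Real.exp (π * minValue ε / 4 * y) : ℂ) *
      theta 3 ε δ ((I * y) • EK41 + R) 0 =
        ∑' N, cexp (-↑(y * gap N) + phase R δ (halfShift ε N)) := fun y => by
    rw [theta, ← tsum_mul_left]
    congr 1
    funext N
    rw [theta_summand_eq, ofReal_exp, ← Complex.exp_add]
    congr 1
    simp only [gap]
    push_cast
    ring
  simp only [hrw]
  exact tendsto_tsum_exp_neg_mul_add gap _ _ hgap hzero _
    (summable_exp_neg_gap_add_phase_re R ε δ hε)

def evenChars : Finset ((Fin 3 → Fin 2) × (Fin 3 → Fin 2)) :=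
  Finset.univ.filter fun c => (∑ j, (c.1 j).val * (c.2 j).val) % 2 = 0

def toIntVec (u : Fin 3 → Fin 2) : Fin 3 → ℤ := fun j => (u j).val

lemma toIntVec_mem_Icc (u : Fin 3 → Fin 2) (j : Fin 3) : toIntVec u j ∈ Set.Icc 0 1 := by
  have := (u j).isLt
  simp only [toIntVec, Set.mem_Icc]
  omega

lemma sum_minValue_evenChars : ∑ c ∈ evenChars, minValue (toIntVec c.1) = 80 := by
  decide

lemma tendsto_exp_mul_thetaNull3 (R : Matrix (Fin 3) (Fin 3) ℂ) :
    Tendsto (fun y : ℝ => (Real.exp (20 * π * y) : ℂ) * thetaNull3 ((I * y) • EK41 + R)) atTop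
      (𝓝 (∏ c ∈ evenChars, limitFactor R (toIntVec c.1) (toIntVec c.2))) := by
  have hexp : ∀ y : ℝ, Real.exp (20 * π * y) =
      ∏ c ∈ evenChars, Real.exp (π * minValue (toIntVec c.1) / 4 * y) := fun y => by
    rw [← Real.exp_sum, ← Finset.sum_mul, ← Finset.sum_div, ← Finset.mul_sum, ← Int.cast_sum,
      sum_minValue_evenChars]
    ring_nf
  refine (tendsto_finsetProd evenChars fun c _ =>
    tendsto_exp_mul_theta R (toIntVec c.1) (toIntVec c.2) (toIntVec_mem_Icc c.1)).congr fun y => ?_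
  rw [hexp, ofReal_prod, Finset.prod_mul_distrib]
  rfl

lemma minimizers_toIntVec_of_ne (u : Fin 3 → Fin 2) (hu : u ≠ ![0, 1, 1]) :
    minimizers (toIntVec u) = {0, -toIntVec u} := by
  revert u
  decide

lemma minimizers_toIntVec_zero_one_one :
    minimizers (toIntVec ![0, 1, 1]) = {0, ![0, -1, 0], ![0, 0, -1], ![0, -1, -1]} := by
  decide

lemma even_sum_toIntVec_mul {u v : Fin 3 → Fin 2} (h : (u, v) ∈ evenChars) :
    Even (∑ j, toIntVec u j * toIntVec v j) := by
  have h' : Even (∑ j, (u j).val * (v j).val) := Nat.even_iff.mpr (Finset.mem_filter.mp h).2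
  simpa [toIntVec] using (Int.even_coe_nat _).mpr h'

lemma limitFactor_ne_zero (R : Matrix (Fin 3) (Fin 3) ℂ) (ε δ : Fin 3 → ℤ)
    (hmin : minimizers ε = {0, -ε}) (heven : Even (∑ j, ε j * δ j)) :
    limitFactor R ε δ ≠ 0 := by
  rw [limitFactor, hmin]
  by_cases hε : ε = 0
  · simp [hε, Complex.exp_ne_zero]
  obtain ⟨k, hk⟩ := heven
  have hneg : phase R δ (halfShift ε (-ε)) = phase R δ (halfShift ε 0) - k * (2 * π * I) := by
    have hk' : (∑ j, (ε j : ℂ) * δ j) = k + k := by exact_mod_cast hk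
    simp only [phase, halfShift, Fin.sum_univ_three, Pi.neg_apply, Pi.zero_apply] at hk' ⊢
    push_cast
    linear_combination (-π * I) * hk'
  rw [Finset.sum_pair (Ne.symm (neg_ne_zero.mpr hε)), hneg, Complex.exp_sub,
    Complex.exp_int_mul_two_pi_mul_I, div_one, ← two_mul]
  exact mul_ne_zero two_ne_zero (Complex.exp_ne_zero _)

lemma limitFactor_zero_one_one (R : Matrix (Fin 3) (Fin 3) ℂ) (hR : R.IsSymm) (δ : Fin 3 → ℤ)
    (hδ : δ 2 = δ 1) :
    limitFactor R (toIntVec ![0, 1, 1]) δ =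
      2 * cexp (phase R δ (halfShift (toIntVec ![0, 1, 1]) ![0, -1, 0])) *
        (1 + cexp (π * I * (R 1 2 + δ 1))) := by
  set P := phase R δ (halfShift (toIntVec ![0, 1, 1]) ![0, -1, 0])
  have h21 := hR.apply 1 2
  have e0 : phase R δ (halfShift (toIntVec ![0, 1, 1]) 0) = P + π * I * (R 1 2 + δ 1) := by
    simp [P, phase, halfShift, toIntVec, Fin.sum_univ_three, hδ, h21]
    ring
  have e2 : phase R δ (halfShift (toIntVec ![0, 1, 1]) ![0, 0, -1]) = P := by
    simp [P, phase, halfShift, toIntVec, Fin.sum_univ_three, hδ, h21]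
    ring
  have e3 : phase R δ (halfShift (toIntVec ![0, 1, 1]) ![0, -1, -1]) =
      P + π * I * (R 1 2 + δ 1) - δ 1 * (2 * π * I) := by
    simp [P, phase, halfShift, toIntVec, Fin.sum_univ_three, hδ, h21]
    ring
  rw [limitFactor, minimizers_toIntVec_zero_one_one, Finset.sum_insert (by decide),
    Finset.sum_insert (by decide), Finset.sum_insert (by decide), Finset.sum_singleton, e0, e2, e3,
    Complex.exp_sub, Complex.exp_int_mul_two_pi_mul_I, Complex.exp_add]
  ring

lemma exp_two_pi_I_mul_eq_one_iff (z : ℂ) :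
    cexp (2 * π * I * z) = 1 ↔ cexp (π * I * z) = -1 ∨ cexp (π * I * (z + 1)) = -1 := by
  have hsq : cexp (2 * π * I * z) = cexp (π * I * z) * cexp (π * I * z) := by
    rw [← Complex.exp_add]
    ring_nf
  have hshift : cexp (π * I * (z + 1)) = -cexp (π * I * z) := by
    rw [mul_add, mul_one, Complex.exp_add, Complex.exp_pi_mul_I, mul_neg_one]
  rw [hsq, mul_self_eq_one_iff, hshift, neg_eq_iff_eq_neg, neg_neg, or_comm]

lemma prod_limitFactor_eq_zero_iff (R : Matrix (Fin 3) (Fin 3) ℂ) (hR : R.IsSymm) :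
    ∏ c ∈ evenChars, limitFactor R (toIntVec c.1) (toIntVec c.2) = 0 ↔
      cexp (2 * π * I * R 1 2) = 1 := by
  rw [Finset.prod_eq_zero_iff, exp_two_pi_I_mul_eq_one_iff]
  constructor
  · rintro ⟨⟨u, v⟩, hc, hzero⟩
    by_cases hu : u = ![0, 1, 1]
    · subst hu
      have hv : v 2 = v 1 := (by decide :
        ∀ v : Fin 3 → Fin 2, (![0, 1, 1], v) ∈ evenChars → v 2 = v 1) v hc
      rw [limitFactor_zero_one_one R hR _ (by simp [toIntVec, hv])] at hzero
      have hexp : cexp (π * I * (R 1 2 + toIntVec v 1)) = -1 := by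
        rcases mul_eq_zero.mp hzero with h | h
        · exact absurd h (mul_ne_zero two_ne_zero (Complex.exp_ne_zero _))
        · linear_combination h
      have hv₁ : toIntVec v 1 = 0 ∨ toIntVec v 1 = 1 := by
        obtain ⟨h₀, h₁⟩ := toIntVec_mem_Icc v 1
        omega
      rcases hv₁ with h | h <;> simp only [h, Int.cast_zero, Int.cast_one, add_zero] at hexp
      exacts [.inl hexp, .inr hexp]
    · exact absurd hzero (limitFactor_ne_zero R _ _ (minimizers_toIntVec_of_ne u hu)
        (even_sum_toIntVec_mul hc))
  · rintro (h | h)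
    · refine ⟨(![0, 1, 1], ![0, 0, 0]), by decide, ?_⟩
      rw [limitFactor_zero_one_one R hR _ rfl]
      simp [toIntVec, h]
    · refine ⟨(![0, 1, 1], ![0, 1, 1]), by decide, ?_⟩
      rw [limitFactor_zero_one_one R hR _ rfl]
      simp [toIntVec, h]

end ThetaK41

theorem stmt_11 (R : Matrix (Fin 3) (Fin 3) ℂ) (hR : R.IsSymm) :
    (∀ᶠ y : ℝ in Filter.atTop, SiegelUpper 3 ((I * (y : ℂ)) • EK41 + R)) ∧
    ∃ L : ℂ,
      Filter.Tendsto
        (fun y : ℝ => (Real.exp (20 * Real.pi * y) : ℂ) *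
          thetaNull3 ((I * (y : ℂ)) • EK41 + R))
        Filter.atTop (nhds L) ∧
      (L = 0 ↔ Complex.exp (2 * ↑Real.pi * I * R 1 2) = 1) :=
  ⟨ThetaK41.eventually_siegelUpper EK41 R ThetaK41.EK41_isSymm ThetaK41.EK41_im
      ThetaK41.posSemidef_EK41_re_sub_one hR,
    _, ThetaK41.tendsto_exp_mul_thetaNull3 R, ThetaK41.prod_limitFactor_eq_zero_iff R hR⟩
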